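/- arXiv:2209.03866 — 5 statements merged into one kernel-verified Lean document; each statement's English description precedes it below -/
import Mathlib

section
/- The function c(z) = ((1+z)/z^2) * log(1+z) - 1/z is strictly decreasing on (0, ∞). -/
/-!
The derivative of `c` is `(2z - (z + 2) log (1 + z)) / z³`, and its numerator is negative for
`z > 0` by the classical bound `log (1 + z) > 2z / (z + 2)`.
-/

open Real

lemma hasDerivAt_one_add_div_sq_mul_log_sub_inv {z : ℝ} (hz : z ≠ 0) (hz₁ : 1 + z ≠ 0) :
    HasDerivAt (fun z : ℝ => ((1 + z) / z ^ 2) * log (1 + z) - 1 / z)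
      ((2 * z - (z + 2) * log (1 + z)) / z ^ 3) z := by
  have hlog : HasDerivAt (fun z : ℝ => log (1 + z)) (1 / (1 + z)) z := by
    simpa [one_div] using ((hasDerivAt_id z).const_add 1).log hz₁
  have hfrac : HasDerivAt (fun z : ℝ => (1 + z) / z ^ 2)
      ((1 * z ^ 2 - (1 + z) * (2 * z)) / (z ^ 2) ^ 2) z := by
    refine ((hasDerivAt_id z).const_add 1).div ?_ (pow_ne_zero 2 hz)
    simpa [mul_comm] using hasDerivAt_pow 2 z
  have hinv : HasDerivAt (fun z : ℝ => 1 / z) (-(1 / z ^ 2)) z := by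
    simpa [one_div] using hasDerivAt_inv hz
  refine ((hfrac.mul hlog).sub hinv).congr_deriv ?_
  field_simp
  ring

theorem c_strict_anti :
    StrictAntiOn (fun z : ℝ => ((1 + z) / z ^ 2) * Real.log (1 + z) - 1 / z)
      (Set.Ioi (0 : ℝ)) := by
  refine strictAntiOn_of_deriv_neg (convex_Ioi 0) (fun z hz => ?_) (fun z hz => ?_)
  · have hz : (0 : ℝ) < z := hz
    exact (hasDerivAt_one_add_div_sq_mul_log_sub_inv hz.ne' (by linarith))
      |>.continuousAt.continuousWithinAt
  · have hz : (0 : ℝ) < z := by simpa using hz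
    rw [(hasDerivAt_one_add_div_sq_mul_log_sub_inv hz.ne' (by linarith)).deriv]
    have hlog := lt_log_one_add_of_pos hz
    rw [div_lt_iff₀ (by linarith)] at hlog
    exact div_neg_of_neg_of_pos (by linarith) (by positivity)
end

section
/- For every real z > 0, log(1+z) > 3z(2+z)/(z^2+6z+6). -/
/-!
The gap `g(x) = log (1 + x) - 3x(2 + x)/(x² + 6x + 6)` vanishes at `0` and has derivative
`x⁴ / ((1 + x)(x² + 6x + 6)²)`, which is positive for `x > 0`; so `g` is strictly increasing
on `[0, ∞)` and hence positive on `(0, ∞)`.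
-/

open Real Set

noncomputable def logPadeGap (x : ℝ) : ℝ := log (1 + x) - 3 * x * (2 + x) / (x ^ 2 + 6 * x + 6)

lemma hasDerivAt_logPadeGap {x : ℝ} (hx : -1 < x) :
    HasDerivAt logPadeGap (x ^ 4 / ((1 + x) * (x ^ 2 + 6 * x + 6) ^ 2)) x := by
  have h_one_add : (1 : ℝ) + x ≠ 0 := by linarith
  have h_denom_ne : x ^ 2 + 6 * x + 6 ≠ 0 := by nlinarith
  have h_log : HasDerivAt (fun y ↦ log (1 + y)) (1 / (1 + x)) x :=
    ((hasDerivAt_id' x).const_add 1).log h_one_add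
  have h_numer : HasDerivAt (fun y ↦ 3 * y * (2 + y)) (3 * 1 * (2 + x) + 3 * x * 1) x :=
    ((hasDerivAt_id' x).const_mul 3).mul ((hasDerivAt_id' x).const_add 2)
  have h_denom : HasDerivAt (fun y ↦ y ^ 2 + 6 * y + 6) (2 * x + 6) x := by
    simpa using ((hasDerivAt_pow 2 x).add ((hasDerivAt_id x).const_mul 6)).add_const 6
  refine (h_log.sub (h_numer.div h_denom h_denom_ne)).congr_deriv ?_
  rw [div_sub_div _ _ h_one_add (pow_ne_zero 2 h_denom_ne)]
  congr 1
  ring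

lemma strictMonoOn_logPadeGap : StrictMonoOn logPadeGap (Ici 0) := by
  have h_deriv (x : ℝ) (hx : 0 ≤ x) := hasDerivAt_logPadeGap (x := x) (by linarith)
  refine strictMonoOn_of_deriv_pos (convex_Ici 0)
    (fun x hx ↦ (h_deriv x hx).continuousAt.continuousWithinAt) fun x hx ↦ ?_
  rw [interior_Ici, mem_Ioi] at hx
  rw [(h_deriv x hx.le).deriv]
  positivity

theorem log_gt_pade (z : ℝ) (hz : 0 < z) :
    Real.log (1 + z) > 3 * z * (2 + z) / (z ^ 2 + 6 * z + 6) := by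
  have h_gap : logPadeGap 0 < logPadeGap z :=
    strictMonoOn_logPadeGap self_mem_Ici hz.le hz
  simpa [logPadeGap] using h_gap
end

section
/- Let ξ(x) = λ x^p + (1-λ) x^s with s > p ≥ 2 integers and λ ∈ (0,1). Then for all x ∈ (0,1], ξ(x)·(ξ'(1) - ξ'(x))/(1-x) - ξ'(x)·(ξ'(x) - ξ(x)/x) ≥ λ(1-λ)(s-p)^2 x^{p+s-2} > 0. -/
/-!
Write `p = a + 1`, `s = b + 1` and `μ = 1 - λ`, so that `ξ(x)/x = λ x^a + μ x^b`. Expanding, the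
left-hand side is a combination with nonnegative coefficients of the four products
`x^(c+1) Σ_{k<n} x^k` (`c, n ∈ {a, b}`) minus an explicit quadratic form in `x^a, x^b`. For
`x ∈ (0,1]` each product is at least `n x^(c+n)`, and after this replacement the `x^(2a)` and
`x^(2b)` terms cancel, leaving `λ μ ((b+1)b + (a+1)a - (a+1)b - (b+1)a) x^(a+b) = λ μ (b-a)^2 x^(a+b)`.
-/


/-- The mixture `ξ(x) = λ x^p + (1-λ) x^s`. -/
def xi (p s : ℕ) (l : ℝ) (x : ℝ) : ℝ := l * x ^ p + (1 - l) * x ^ s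

/-- Its derivative `ξ'(x)`. -/
def xi' (p s : ℕ) (l : ℝ) (x : ℝ) : ℝ :=
  (p : ℝ) * l * x ^ (p - 1) + (s : ℝ) * (1 - l) * x ^ (s - 1)

/-- The polynomial `(ξ'(1) - ξ'(x))/(1 - x)`, interpreted via the polynomial identity
`(ξ'(1) - ξ'(x))/(1-x) = pλ Σ_{k<p-1} x^k + s(1-λ) Σ_{k<s-1} x^k`. -/
def diffQuot (p s : ℕ) (l : ℝ) (x : ℝ) : ℝ :=
  (p : ℝ) * l * ∑ k ∈ Finset.range (p - 1), x ^ k +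
    (s : ℝ) * (1 - l) * ∑ k ∈ Finset.range (s - 1), x ^ k

open Finset

lemma natCast_mul_pow_le_pow_mul_geom_sum {x : ℝ} (hx0 : 0 ≤ x) (hx1 : x ≤ 1) (c n : ℕ) :
    (n : ℝ) * x ^ (c + n) ≤ x ^ (c + 1) * ∑ k ∈ range n, x ^ k := by
  calc (n : ℝ) * x ^ (c + n) = ∑ _k ∈ range n, x ^ (c + n) := by simp
    _ ≤ ∑ k ∈ range n, x ^ (c + 1 + k) := by
        refine sum_le_sum fun k hk => pow_le_pow_of_le_one hx0 hx1 ?_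
        simp only [mem_range] at hk
        omega
    _ = x ^ (c + 1) * ∑ k ∈ range n, x ^ k := by simp only [pow_add, mul_sum]

lemma two_term_inequality (a b : ℕ) {l m x : ℝ} (hl : 0 ≤ l) (hm : 0 ≤ m)
    (hx0 : 0 ≤ x) (hx1 : x ≤ 1) :
    l * m * ((b : ℝ) - a) ^ 2 * x ^ (a + b) ≤
      (l * x ^ (a + 1) + m * x ^ (b + 1)) *
          ((a + 1) * l * ∑ k ∈ range a, x ^ k + (b + 1) * m * ∑ k ∈ range b, x ^ k)
        - ((a + 1) * l * x ^ a + (b + 1) * m * x ^ b) * (a * l * x ^ a + b * m * x ^ b) := by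
  have key := natCast_mul_pow_le_pow_mul_geom_sum hx0 hx1
  have haa := mul_le_mul_of_nonneg_left (key a a) (by positivity : 0 ≤ (a + 1 : ℝ) * l * l)
  have hab := mul_le_mul_of_nonneg_left (key a b) (by positivity : 0 ≤ (b + 1 : ℝ) * l * m)
  have hba := mul_le_mul_of_nonneg_left (key b a) (by positivity : 0 ≤ (a + 1 : ℝ) * m * l)
  have hbb := mul_le_mul_of_nonneg_left (key b b) (by positivity : 0 ≤ (b + 1 : ℝ) * m * m)
  simp only [pow_add, pow_one] at haa hab hba hbb ⊢
  linarith

lemma xi_succ_succ_div_self (a b : ℕ) (l : ℝ) {x : ℝ} (hx : x ≠ 0) :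
    xi (a + 1) (b + 1) l x / x = l * x ^ a + (1 - l) * x ^ b := by
  rw [div_eq_iff hx, xi]
  ring

theorem xi_inequality (p s : ℕ) (l : ℝ) (hp : 2 ≤ p) (hps : p < s)
    (hl : l ∈ Set.Ioo (0 : ℝ) 1) :
    ∀ x ∈ Set.Ioc (0 : ℝ) 1,
      xi p s l x * diffQuot p s l x
          - xi' p s l x * (xi' p s l x - xi p s l x / x)
        ≥ l * (1 - l) * ((s : ℝ) - (p : ℝ)) ^ 2 * x ^ (p + s - 2)
      ∧ 0 < l * (1 - l) * ((s : ℝ) - (p : ℝ)) ^ 2 * x ^ (p + s - 2) := by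
  rintro x ⟨hx0, hx1⟩
  obtain ⟨hl0, hl1⟩ := hl
  have hsp : (0 : ℝ) < s - p := sub_pos.2 (by exact_mod_cast hps)
  have hml : 0 < 1 - l := sub_pos.2 hl1
  refine ⟨?_, by positivity⟩
  obtain ⟨a, rfl⟩ : ∃ a, p = a + 1 := ⟨p - 1, by omega⟩
  obtain ⟨b, rfl⟩ : ∃ b, s = b + 1 := ⟨s - 1, by omega⟩
  have hbound := two_term_inequality a b hl0.le hml.le hx0.le hx1
  rw [xi_succ_succ_div_self a b l hx0.ne', show a + 1 + (b + 1) - 2 = a + b by omega]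
  simp only [xi, xi', diffQuot, Nat.add_sub_cancel, Nat.cast_add, Nat.cast_one] at hbound ⊢
  linarith
end

section
/- Let p ≥ 3 be an integer. For all integers (or reals) s > 0 and p, the inequality 2(2p+3)(p-1)s^2 + 12(p-1)^2(p-2)s + 4(p-1)^2(p-2)^2 > 0 holds; consequently, if Δ := s^2 - 6(p-1)s + (p-1)(p+7) > 0 with s > p > 2, then λ_2* := 2s(s-1)(s-2)/((s-p)(a - p√Δ)) with a = 2s^2 + 3(p-2)s - (p-1)(p+4) satisfies λ_2* < 1. -/
/-!
Write `Δ = s² - 6(p-1)s + (p-1)(p+7)` and `a = 2s² + 3(p-2)s - (p-1)(p+4)`. Clearing the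
denominator, `λ₂* < 1` says `2s(s-1)(s-2) < (s-p)(a - p√Δ)`. The gap `(s-p)a - 2s(s-1)(s-2)`
factors as `p·B` with `B = s² - (4p-3)s + (p-1)(p+4) = Δ + (2p-3)s - 3(p-1)` (`gap` below), so the
claim becomes `(s-p)√Δ < B`. Here `B > 0`, and `B² - (s-p)²Δ = 4(p-1)(p-2)(s-1)(s-2) > 0`.
-/

namespace LambdaTwoStar

def discr (p s : ℝ) : ℝ := s ^ 2 - 6 * (p - 1) * s + (p - 1) * (p + 7)

def coeffA (p s : ℝ) : ℝ := 2 * s ^ 2 + 3 * (p - 2) * s - (p - 1) * (p + 4)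

noncomputable def lambdaTwo (p s : ℝ) : ℝ :=
  2 * s * (s - 1) * (s - 2) / ((s - p) * (coeffA p s - p * Real.sqrt (discr p s)))

def gap (p s : ℝ) : ℝ := s ^ 2 - (4 * p - 3) * s + (p - 1) * (p + 4)

lemma quadratic_pos {p s : ℝ} (hp : 2 ≤ p) (hs : 0 < s) :
    0 < 2 * (2 * p + 3) * (p - 1) * s ^ 2 + 12 * (p - 1) ^ 2 * (p - 2) * s
      + 4 * (p - 1) ^ 2 * (p - 2) ^ 2 := by
  have hlead : 0 < 2 * (2 * p + 3) * (p - 1) * s ^ 2 := by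
    have : 0 < p - 1 := by linarith
    have : 0 < 2 * p + 3 := by linarith
    positivity
  have hp2 : 0 ≤ p - 2 := by linarith
  have hmid : 0 ≤ 12 * (p - 1) ^ 2 * (p - 2) * s := by positivity
  have hlast : 0 ≤ 4 * (p - 1) ^ 2 * (p - 2) ^ 2 := by positivity
  linarith

lemma sub_mul_coeffA_sub_eq (p s : ℝ) :
    (s - p) * coeffA p s - 2 * s * (s - 1) * (s - 2) = p * gap p s := by
  unfold coeffA gap; ring

lemma gap_eq_discr_add (p s : ℝ) : gap p s = discr p s + ((2 * p - 3) * s - 3 * (p - 1)) := by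
  unfold gap discr; ring

lemma gap_sq_sub_eq (p s : ℝ) :
    gap p s ^ 2 - (s - p) ^ 2 * discr p s = 4 * (p - 1) * (p - 2) * ((s - 1) * (s - 2)) := by
  unfold gap discr; ring

lemma gap_pos {p s : ℝ} (hp : 3 ≤ p) (hps : p < s) (hΔ : 0 ≤ discr p s) : 0 < gap p s := by
  rw [gap_eq_discr_add]
  nlinarith

lemma sub_mul_sqrt_discr_lt_gap {p s : ℝ} (hp : 3 ≤ p) (hps : p < s) (hΔ : 0 ≤ discr p s) :
    (s - p) * Real.sqrt (discr p s) < gap p s := by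
  have hsp : 0 ≤ s - p := by linarith
  rw [← Real.sqrt_sq hsp, ← Real.sqrt_mul (sq_nonneg _), Real.sqrt_lt' (gap_pos hp hps hΔ)]
  have : 0 < 4 * (p - 1) * (p - 2) * ((s - 1) * (s - 2)) := by
    have : 0 < (s - 1) * (s - 2) := by nlinarith
    have : 0 < p - 1 := by linarith
    have : 0 < p - 2 := by linarith
    positivity
  linarith [gap_sq_sub_eq p s]

theorem lambdaTwo_lt_one {p s : ℝ} (hp : 3 ≤ p) (hps : p < s) (hΔ : 0 ≤ discr p s) :
    lambdaTwo p s < 1 := by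
  have hnum : 0 < 2 * s * (s - 1) * (s - 2) := by
    have : 0 < s - 2 := by linarith
    have : 0 < s - 1 := by linarith
    have : 0 < s := by linarith
    positivity
  have hlt : 2 * s * (s - 1) * (s - 2) < (s - p) * (coeffA p s - p * Real.sqrt (discr p s)) := by
    have := sub_mul_coeffA_sub_eq p s
    nlinarith [sub_mul_sqrt_discr_lt_gap hp hps hΔ]
  exact (div_lt_one (hnum.trans hlt)).2 hlt

end LambdaTwoStar

theorem lambda2_lt_one (p : ℕ) (hp : 3 ≤ p) :
    (∀ s : ℝ, 0 < s →
        0 < 2 * (2 * (p : ℝ) + 3) * ((p : ℝ) - 1) * s ^ 2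
            + 12 * ((p : ℝ) - 1) ^ 2 * ((p : ℝ) - 2) * s
            + 4 * ((p : ℝ) - 1) ^ 2 * ((p : ℝ) - 2) ^ 2) ∧
    (∀ s : ℕ, p < s →
        0 < (s : ℝ) ^ 2 - 6 * ((p : ℝ) - 1) * (s : ℝ) + ((p : ℝ) - 1) * ((p : ℝ) + 7) →
        2 * (s : ℝ) * ((s : ℝ) - 1) * ((s : ℝ) - 2) /
            (((s : ℝ) - (p : ℝ)) *
              ((2 * (s : ℝ) ^ 2 + 3 * ((p : ℝ) - 2) * (s : ℝ) - ((p : ℝ) - 1) * ((p : ℝ) + 4))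
                - (p : ℝ) * Real.sqrt
                    ((s : ℝ) ^ 2 - 6 * ((p : ℝ) - 1) * (s : ℝ)
                      + ((p : ℝ) - 1) * ((p : ℝ) + 7))))
          < 1) := by
  have hp' : (3 : ℝ) ≤ p := by exact_mod_cast hp
  exact ⟨fun s hs => LambdaTwoStar.quadratic_pos (by linarith) hs,
    fun s hps hΔ => LambdaTwoStar.lambdaTwo_lt_one hp' (by exact_mod_cast hps) hΔ.le⟩
end

section
/- Let s > p > 2 be integers with Δ := s^2 - 6(p-1)s + (p-1)(p+7) > 0. Then s^2 - 5ps + 5s + 2p^2 - 2 - 2(p-1)√(2(p-2)(s-2)) > 0. -/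
/-!
Write `A = s² - 5ps + 5s + 2p² - 2`. Two polynomial identities carry the proof:
`A = Δ + (p - 1)(s + p - 5)`, so `A > 0`, and
`A² - 8(p - 1)²(p - 2)(s - 2) = (s - 2(p - 1))² Δ`, whose right side is positive because
`Δ < 0` at `s = 2(p - 1)`. Comparing squares then gives `A > 2(p - 1)√(2(p - 2)(s - 2))`.
-/

theorem Real.mul_sqrt_lt_of_sq_mul_lt {a c x : ℝ} (ha : 0 < a) (hc : 0 ≤ c)
    (h : c ^ 2 * x < a ^ 2) : c * √x < a := by
  rw [← Real.sqrt_sq hc, ← Real.sqrt_mul (sq_nonneg c)]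
  exact (Real.sqrt_lt' ha).2 h

theorem key_quadratic_eq (p s : ℝ) :
    s ^ 2 - 5 * p * s + 5 * s + 2 * p ^ 2 - 2
      = s ^ 2 - 6 * (p - 1) * s + (p - 1) * (p + 7) + (p - 1) * (s + p - 5) := by
  ring

theorem key_quadratic_sq_sub (p s : ℝ) :
    (s ^ 2 - 5 * p * s + 5 * s + 2 * p ^ 2 - 2) ^ 2 - (2 * (p - 1)) ^ 2 * (2 * (p - 2) * (s - 2))
      = (s - 2 * (p - 1)) ^ 2 * (s ^ 2 - 6 * (p - 1) * s + (p - 1) * (p + 7)) := by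
  ring

theorem key_quadratic_pos {p s : ℝ} (hp : 3 ≤ p) (hps : p < s)
    (hΔ : 0 < s ^ 2 - 6 * (p - 1) * s + (p - 1) * (p + 7)) :
    0 < s ^ 2 - 5 * p * s + 5 * s + 2 * p ^ 2 - 2 := by
  have : 0 < (p - 1) * (s + p - 5) := mul_pos (by linarith) (by linarith)
  rw [key_quadratic_eq]
  positivity

theorem ne_two_mul_sub_one_of_discr_pos {p s : ℝ} (hp : 3 ≤ p)
    (hΔ : 0 < s ^ 2 - 6 * (p - 1) * s + (p - 1) * (p + 7)) : s ≠ 2 * (p - 1) := by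
  rintro rfl
  have : 0 < (p - 1) * (7 * p - 15) := mul_pos (by linarith) (by linarith)
  linarith [show (2 * (p - 1)) ^ 2 - 6 * (p - 1) * (2 * (p - 1)) + (p - 1) * (p + 7)
    = -((p - 1) * (7 * p - 15)) by ring]

theorem key_positivity (p s : ℕ) (hp : 2 < p) (hps : p < s)
    (hΔ : 0 < (s : ℝ) ^ 2 - 6 * ((p : ℝ) - 1) * (s : ℝ) + ((p : ℝ) - 1) * ((p : ℝ) + 7)) :
    0 < (s : ℝ) ^ 2 - 5 * (p : ℝ) * (s : ℝ) + 5 * (s : ℝ) + 2 * (p : ℝ) ^ 2 - 2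
        - 2 * ((p : ℝ) - 1) * Real.sqrt (2 * ((p : ℝ) - 2) * ((s : ℝ) - 2)) := by
  have hp3 : (3 : ℝ) ≤ p := by exact_mod_cast hp
  have hps' : (p : ℝ) < s := by exact_mod_cast hps
  have hne := sub_ne_zero.2 (ne_two_mul_sub_one_of_discr_pos hp3 hΔ)
  rw [sub_pos]
  refine Real.mul_sqrt_lt_of_sq_mul_lt (key_quadratic_pos hp3 hps' hΔ) (by linarith) ?_
  rw [← sub_pos, key_quadratic_sq_sub]
  exact mul_pos (sq_pos_of_ne_zero hne) hΔ
end
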